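/- arXiv:1608.07778 — 3 statements merged into one kernel-verified Lean document; each statement's English description precedes it below -/
import Mathlib

section
/- Let G=(V,w,m) be a connected weighted graph with 𝔇 < ∞ satisfying the gradient estimate Γ(P_t f) ≤ e^{-2Kt} P_t(Γf) for all bounded f and t ≥ 0, where K > 0 and P_t is the heat semigroup. Then the resistance metric satisfies ρ(x₀,y₀) ≤ (√(2 Deg(x₀)) + √(2 Deg(y₀)))/K for all x₀, y₀ ∈ V. -/
open scoped ENNReal

structure WGraph (V : Type*) where
  w : V → V → ℝ
  m : V → ℝ
  symm : ∀ x y, w x y = w y x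
  nonneg : ∀ x y, 0 ≤ w x y
  loopless : ∀ x, w x x = 0
  mpos : ∀ x, 0 < m x
  locfin : ∀ x, {y | w x y ≠ 0}.Finite

variable {V : Type*}

noncomputable def WGraph.lap (G : WGraph V) (f : V → ℝ) (x : V) : ℝ :=
  (1 / G.m x) * ∑' y, G.w x y * (f y - f x)

noncomputable def WGraph.gamma (G : WGraph V) (f g : V → ℝ) (x : V) : ℝ :=
  (G.lap (f * g) x - f x * G.lap g x - g x * G.lap f x) / 2

noncomputable def WGraph.gamma2 (G : WGraph V) (f : V → ℝ) (x : V) : ℝ :=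
  (G.lap (G.gamma f f) x - 2 * G.gamma f (G.lap f) x) / 2

noncomputable def WGraph.deg (G : WGraph V) (x : V) : ℝ :=
  (∑' y, G.w x y) / G.m x

noncomputable def WGraph.cdist (G : WGraph V) (x y : V) : ℕ∞ :=
  ⨅ (n : ℕ) (_ : ∃ c : ℕ → V, c 0 = x ∧ c n = y ∧ ∀ i < n, 0 < G.w (c i) (c (i+1))), (n : ℕ∞)

noncomputable def WGraph.rho (G : WGraph V) (x y : V) : ℝ≥0∞ :=
  ⨆ (f : V → ℝ) (_ : ∀ z, G.gamma f f z ≤ 1), ENNReal.ofReal (f y - f x)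

noncomputable def WGraph.diamd (G : WGraph V) : ℝ≥0∞ := ⨆ x, ⨆ y, (G.cdist x y : ℝ≥0∞)

noncomputable def WGraph.diamrho (G : WGraph V) : ℝ≥0∞ := ⨆ x, ⨆ y, G.rho x y

def WGraph.Connected (G : WGraph V) : Prop :=
  ∀ x y, ∃ (n : ℕ) (c : ℕ → V), c 0 = x ∧ c n = y ∧ ∀ i < n, 0 < G.w (c i) (c (i+1))

/-- An abstract heat semigroup for the graph Laplacian: initial condition,
pointwise derivative given by the Laplacian (for bounded functions),
and the Markov properties (monotone bounds and positivity preservation). -/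
structure IsHeatSemigroup (G : WGraph V) (P : ℝ → (V → ℝ) → V → ℝ) : Prop where
  init : ∀ f, P 0 f = f
  deriv : ∀ (f : V → ℝ), (∃ C, ∀ x, |f x| ≤ C) →
    ∀ (t : ℝ) (x : V), HasDerivAt (fun s => P s f x) (G.lap (P t f) x) t
  mono : ∀ (g : V → ℝ) (c : ℝ), (∀ y, g y ≤ c) → ∀ t, 0 ≤ t → ∀ x, P t g x ≤ c
  pos : ∀ (g : V → ℝ), (∀ y, 0 ≤ g y) → ∀ t, 0 ≤ t → ∀ x, 0 ≤ P t g x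

/-!
If `Γ f ≤ 1`, the gradient estimate and the Markov bound `P_t (Γ f) ≤ 1` give
`Γ(P_t f) ≤ e^{-2Kt}`. Since `(Δ g)² ≤ 2 Deg · Γ g`, the speed `|∂_t P_t f(x)| = |Δ P_t f(x)|`
is at most `√(2 Deg x) e^{-Kt}`, so the heat flow moves `f(x)` by at most `√(2 Deg x) / K` in
total. On the other hand `Γ(P_t f) → 0` uniformly, and along a fixed path from `x₀` to `y₀` this
forces `P_t f(y₀) - P_t f(x₀) → 0`. Unbounded `f` are first clamped to `[-M, M]`, which keeps
`f(x₀), f(y₀)` and does not increase `Γ f`.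
-/

lemma abs_le_sqrt_mul_of_sq_le_mul_sq {d a e : ℝ} (he : 0 ≤ e) (h : d ^ 2 ≤ a * e ^ 2) :
    |d| ≤ Real.sqrt a * e := by
  rw [← Real.sqrt_sq he, ← Real.sqrt_mul' a (sq_nonneg e)]
  exact Real.abs_le_sqrt h

lemma abs_sub_le_of_abs_deriv_le_mul_exp {u u' : ℝ → ℝ} {a K T : ℝ} (hK : 0 < K) (hT : 0 ≤ T)
    (hu : ∀ t, 0 ≤ t → HasDerivAt u (u' t) t)
    (hu' : ∀ t, 0 ≤ t → |u' t| ≤ a * Real.exp (-(K * t))) :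
    |u T - u 0| ≤ a / K := by
  have ha : 0 ≤ a := by simpa using (abs_nonneg _).trans (hu' 0 le_rfl)
  set B := fun t => a / K * (1 - Real.exp (-(K * t)))
  have hB : ∀ t, HasDerivAt B (a * Real.exp (-(K * t))) t := fun t => by
    have hlin : HasDerivAt (fun t => -(K * t)) (-K) t := by
      simpa using ((hasDerivAt_id t).const_mul K).fun_neg
    exact ((hlin.exp.const_sub 1).const_mul (a / K)).congr_deriv (by field_simp)
  have hfence := image_norm_le_of_norm_deriv_right_le_deriv_boundary (a := 0) (b := T)
    (f := fun t => u t - u 0)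
    (fun t ht => ((hu t ht.1).continuousAt.sub continuousAt_const).continuousWithinAt)
    (fun t ht => ((hu t ht.1).sub_const (u 0)).hasDerivWithinAt) (by simp [B]) hB
    (fun t ht => hu' t ht.1) ⟨hT, le_rfl⟩
  calc |u T - u 0| ≤ a / K * (1 - Real.exp (-(K * T))) := hfence
    _ ≤ a / K :=
      mul_le_of_le_one_right (div_nonneg ha hK.le) (by linarith [Real.exp_pos (-(K * T))])

lemma exists_bounded_contraction_eq {α : Type*} (f : α → ℝ) (x y : α) :
    ∃ g : α → ℝ, (∃ C, ∀ v, |g v| ≤ C) ∧ (∀ a b, |g a - g b| ≤ |f a - f b|) ∧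
      g x = f x ∧ g y = f y := by
  set M := max |f x| |f y|
  have hM : -M ≤ M := neg_le_self ((abs_nonneg _).trans (le_max_left _ _))
  have hmem : ∀ {v}, |f v| ≤ M → f v ∈ Set.Icc (-M) M := fun h => abs_le.1 h
  refine ⟨fun v => Set.projIcc (-M) M hM (f v), ⟨M, fun v => abs_le.2 (Set.projIcc _ _ hM _).2⟩,
    fun a b => Set.abs_projIcc_sub_projIcc hM, ?_, ?_⟩
  · simp [Set.projIcc_of_mem hM (hmem (le_max_left _ _))]
  · simp [Set.projIcc_of_mem hM (hmem (le_max_right _ _))]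

namespace WGraph

variable (G : WGraph V)

noncomputable def nbr (x : V) : Finset V := (G.locfin x).toFinset

lemma mem_nbr {x y : V} : y ∈ G.nbr x ↔ G.w x y ≠ 0 := by simp [nbr]

lemma tsum_eq_sum_nbr {x : V} (g : V → ℝ) (hg : ∀ y, G.w x y = 0 → g y = 0) :
    ∑' y, g y = ∑ y ∈ G.nbr x, g y :=
  tsum_eq_sum fun y hy => hg y (not_not.1 (mt G.mem_nbr.2 hy))

lemma lap_eq_sum (f : V → ℝ) (x : V) :
    G.lap f x = (1 / G.m x) * ∑ y ∈ G.nbr x, G.w x y * (f y - f x) := by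
  rw [lap, G.tsum_eq_sum_nbr (x := x) _ fun y hy => by simp [hy]]

lemma deg_eq_sum (x : V) : G.deg x = (∑ y ∈ G.nbr x, G.w x y) / G.m x := by
  rw [deg, G.tsum_eq_sum_nbr _ fun y hy => hy]

lemma gamma_self_eq_sum (f : V → ℝ) (x : V) :
    G.gamma f f x = (1 / (2 * G.m x)) * ∑ y ∈ G.nbr x, G.w x y * (f y - f x) ^ 2 := by
  have hsum : ∑ y ∈ G.nbr x, G.w x y * ((f * f) y - (f * f) x)
      - 2 * f x * ∑ y ∈ G.nbr x, G.w x y * (f y - f x)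
      = ∑ y ∈ G.nbr x, G.w x y * (f y - f x) ^ 2 := by
    rw [Finset.mul_sum, ← Finset.sum_sub_distrib]
    exact Finset.sum_congr rfl fun y _ => by simp only [Pi.mul_apply]; ring
  have hm := (G.mpos x).ne'
  rw [gamma, lap_eq_sum, lap_eq_sum, ← hsum]
  field_simp
  ring

lemma deg_nonneg (x : V) : 0 ≤ G.deg x := by
  rw [deg]
  exact div_nonneg (tsum_nonneg (G.nonneg x)) (G.mpos x).le

lemma w_mul_sq_sub_le_gamma (f : V → ℝ) (x y : V) :
    G.w x y * (f y - f x) ^ 2 ≤ 2 * G.m x * G.gamma f f x := by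
  have hm := (G.mpos x).ne'
  have hterm : ∀ z, 0 ≤ G.w x z * (f z - f x) ^ 2 := fun z =>
    mul_nonneg (G.nonneg x z) (sq_nonneg _)
  rw [gamma_self_eq_sum, ← mul_assoc, mul_one_div_cancel (mul_ne_zero two_ne_zero hm), one_mul]
  by_cases hw : G.w x y = 0
  · simpa [hw] using Finset.sum_nonneg fun z _ => hterm z
  · exact Finset.single_le_sum (fun z _ => hterm z) (G.mem_nbr.2 hw)

lemma abs_sub_le_of_gamma_le {f : V → ℝ} {x y : V} {ε : ℝ} (hw : 0 < G.w x y) (hε : 0 ≤ ε)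
    (hΓ : G.gamma f f x ≤ ε ^ 2) :
    |f y - f x| ≤ Real.sqrt (2 * G.m x / G.w x y) * ε := by
  refine abs_le_sqrt_mul_of_sq_le_mul_sq hε ?_
  rw [div_mul_eq_mul_div, le_div_iff₀ hw, mul_comm]
  calc G.w x y * (f y - f x) ^ 2 ≤ 2 * G.m x * G.gamma f f x := G.w_mul_sq_sub_le_gamma f x y
    _ ≤ 2 * G.m x * ε ^ 2 := by gcongr; linarith [G.mpos x]

/-- Cauchy–Schwarz with weights `w x y`. -/
lemma lap_sq_le (f : V → ℝ) (x : V) : G.lap f x ^ 2 ≤ 2 * G.deg x * G.gamma f f x := by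
  have hm := (G.mpos x).ne'
  have hCS := Finset.sum_mul_sq_le_sq_mul_sq (G.nbr x) (fun y => Real.sqrt (G.w x y))
    (fun y => Real.sqrt (G.w x y) * (f y - f x))
  simp only [← mul_assoc, mul_pow, Real.mul_self_sqrt (G.nonneg x _),
    Real.sq_sqrt (G.nonneg x _)] at hCS
  rw [lap_eq_sum, gamma_self_eq_sum, deg_eq_sum]
  calc (1 / G.m x * ∑ y ∈ G.nbr x, G.w x y * (f y - f x)) ^ 2
      = (∑ y ∈ G.nbr x, G.w x y * (f y - f x)) ^ 2 / G.m x ^ 2 := by ring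
    _ ≤ (∑ y ∈ G.nbr x, G.w x y) * (∑ y ∈ G.nbr x, G.w x y * (f y - f x) ^ 2)
        / G.m x ^ 2 := by gcongr
    _ = _ := by field_simp

lemma gamma_le_gamma_of_abs_sub_le {f g : V → ℝ} (h : ∀ a b, |g a - g b| ≤ |f a - f b|) (x : V) :
    G.gamma g g x ≤ G.gamma f f x := by
  rw [gamma_self_eq_sum, gamma_self_eq_sum]
  have hm := G.mpos x
  refine mul_le_mul_of_nonneg_left (Finset.sum_le_sum fun y _ => ?_) (by positivity)
  exact mul_le_mul_of_nonneg_left (sq_le_sq.2 (h y x)) (G.nonneg x y)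

lemma Connected.exists_abs_sub_le {G : WGraph V} (hG : G.Connected) (x y : V) :
    ∃ C, ∀ (f : V → ℝ) (ε : ℝ), 0 ≤ ε → (∀ z, G.gamma f f z ≤ ε ^ 2) → |f y - f x| ≤ C * ε := by
  obtain ⟨n, c, rfl, rfl, hc⟩ := hG x y
  refine ⟨∑ i ∈ Finset.range n, Real.sqrt (2 * G.m (c i) / G.w (c i) (c (i + 1))),
    fun f ε hε hΓ => ?_⟩
  rw [← Finset.sum_range_sub (fun i => f (c i)), Finset.sum_mul]
  refine (Finset.abs_sum_le_sum_abs _ _).trans (Finset.sum_le_sum fun i hi => ?_)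
  exact G.abs_sub_le_of_gamma_le (hc i (Finset.mem_range.1 hi)) hε (hΓ _)

end WGraph

/-- The semigroup form of the Bakry–Émery condition `CD(K, ∞)`. -/
def WGraph.SatisfiesGradientEstimate (G : WGraph V) (P : ℝ → (V → ℝ) → V → ℝ) (K : ℝ) : Prop :=
  ∀ (f : V → ℝ), (∃ C, ∀ x, |f x| ≤ C) → ∀ t, 0 ≤ t → ∀ x,
    G.gamma (P t f) (P t f) x ≤ Real.exp (-(2 * K * t)) * P t (G.gamma f f) x

namespace IsHeatSemigroup

variable {G : WGraph V} {P : ℝ → (V → ℝ) → V → ℝ} {K : ℝ} {f : V → ℝ}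

lemma gamma_le_exp_sq (hP : IsHeatSemigroup G P) (hgrad : G.SatisfiesGradientEstimate P K)
    (hb : ∃ C, ∀ x, |f x| ≤ C) (hΓ : ∀ z, G.gamma f f z ≤ 1) {t : ℝ} (ht : 0 ≤ t) (z : V) :
    G.gamma (P t f) (P t f) z ≤ Real.exp (-(K * t)) ^ 2 := by
  calc G.gamma (P t f) (P t f) z ≤ Real.exp (-(2 * K * t)) * P t (G.gamma f f) z :=
        hgrad f hb t ht z
    _ ≤ Real.exp (-(2 * K * t)) * 1 := by gcongr; exact hP.mono _ 1 hΓ t ht z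
    _ = Real.exp (-(K * t)) ^ 2 := by rw [mul_one, ← Real.exp_nat_mul]; ring_nf

lemma abs_sub_le (hP : IsHeatSemigroup G P) (hgrad : G.SatisfiesGradientEstimate P K)
    (hb : ∃ C, ∀ x, |f x| ≤ C) (hΓ : ∀ z, G.gamma f f z ≤ 1) (hK : 0 < K) {T : ℝ} (hT : 0 ≤ T)
    (x : V) :
    |P T f x - f x| ≤ Real.sqrt (2 * G.deg x) / K := by
  have hspeed : ∀ t, 0 ≤ t →
      |G.lap (P t f) x| ≤ Real.sqrt (2 * G.deg x) * Real.exp (-(K * t)) := fun t ht => by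
    refine abs_le_sqrt_mul_of_sq_le_mul_sq (Real.exp_nonneg _) ((G.lap_sq_le _ x).trans ?_)
    have := G.deg_nonneg x
    gcongr
    exact hP.gamma_le_exp_sq hgrad hb hΓ ht x
  simpa [hP.init] using abs_sub_le_of_abs_deriv_le_mul_exp hK hT
    (fun t _ => hP.deriv f hb t x) hspeed

lemma sub_le (hP : IsHeatSemigroup G P) (hgrad : G.SatisfiesGradientEstimate P K)
    (hb : ∃ C, ∀ x, |f x| ≤ C) (hΓ : ∀ z, G.gamma f f z ≤ 1) (hconn : G.Connected) (hK : 0 < K)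
    (x y : V) :
    f y - f x ≤ (Real.sqrt (2 * G.deg x) + Real.sqrt (2 * G.deg y)) / K := by
  obtain ⟨C, hC⟩ := hconn.exists_abs_sub_le x y
  have hbound : ∀ T, 0 ≤ T →
      f y - f x ≤ (Real.sqrt (2 * G.deg x) + Real.sqrt (2 * G.deg y)) / K +
        C * Real.exp (-(K * T)) := fun T hT => by
    have hx := hP.abs_sub_le hgrad hb hΓ hK hT x
    have hy := hP.abs_sub_le hgrad hb hΓ hK hT y
    have hxy := hC (P T f) _ (Real.exp_nonneg _) (hP.gamma_le_exp_sq hgrad hb hΓ hT)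
    rw [add_div]
    linarith [abs_le.1 hx, abs_le.1 hy, abs_le.1 hxy]
  have hlim : Filter.Tendsto (fun T => C * Real.exp (-(K * T))) Filter.atTop (nhds 0) := by
    simpa using (Real.tendsto_exp_atBot.comp
      (Filter.tendsto_neg_atTop_atBot.comp (Filter.tendsto_id.const_mul_atTop hK))).const_mul C
  refine ge_of_tendsto (by simpa only [add_zero] using hlim.const_add _) ?_
  filter_upwards [Filter.eventually_ge_atTop 0] with T hT using hbound T hT

end IsHeatSemigroup

theorem rho_le_of_gradient_estimate_general (G : WGraph V) (hconn : G.Connected)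
    (K : ℝ) (hK : 0 < K) (P : ℝ → (V → ℝ) → V → ℝ) (hP : IsHeatSemigroup G P)
    (hgrad : ∀ (f : V → ℝ), (∃ C, ∀ x, |f x| ≤ C) → ∀ t, 0 ≤ t → ∀ x,
      G.gamma (P t f) (P t f) x ≤ Real.exp (-(2 * K * t)) * P t (G.gamma f f) x)
    (x₀ y₀ : V) :
    G.rho x₀ y₀ ≤
      ENNReal.ofReal ((Real.sqrt (2 * G.deg x₀) + Real.sqrt (2 * G.deg y₀)) / K) := by
  refine iSup₂_le fun f hf => ENNReal.ofReal_le_ofReal ?_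
  obtain ⟨g, hb, hcontr, hx₀, hy₀⟩ := exists_bounded_contraction_eq f x₀ y₀
  rw [← hx₀, ← hy₀]
  exact hP.sub_le hgrad hb (fun z => (G.gamma_le_gamma_of_abs_sub_le hcontr z).trans (hf z))
    hconn hK x₀ y₀

/-- gradient estimate Γ(P_t f) ≤ e^{-2Kt}P_t(Γf) for bounded f, K>0,
connected, 𝔇 < ∞ ⟹ ρ(x₀,y₀) ≤ (√(2 Deg x₀) + √(2 Deg y₀))/K. -/
theorem rho_le_of_gradient_estimate (G : WGraph V) (hconn : G.Connected)
    (hDfin : BddAbove (Set.range G.deg))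
    (K : ℝ) (hK : 0 < K) (P : ℝ → (V → ℝ) → V → ℝ) (hP : IsHeatSemigroup G P)
    (hgrad : ∀ (f : V → ℝ), (∃ C, ∀ x, |f x| ≤ C) → ∀ t, 0 ≤ t → ∀ x,
      G.gamma (P t f) (P t f) x ≤ Real.exp (-(2 * K * t)) * P t (G.gamma f f) x)
    (x₀ y₀ : V) :
    G.rho x₀ y₀ ≤
      ENNReal.ofReal ((Real.sqrt (2 * G.deg x₀) + Real.sqrt (2 * G.deg y₀)) / K) :=
  rho_le_of_gradient_estimate_general G hconn K hK P hP hgrad x₀ y₀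
end

section
/- The n-dimensional hypercube graph Q_n (vertex set {0,1}ⁿ, unit edge weights between vertices differing in exactly one coordinate, vertex measure m ≡ 1) satisfies the Bakry-Émery curvature dimension condition CD(2,∞), i.e., Γ₂(f) ≥ 2Γ(f) for all f: {0,1}ⁿ → ℝ. -/
open scoped ENNReal

variable {V : Type*}

/-- The n-dimensional hypercube: vertices {0,1}ⁿ, unit weights between vertices
differing in exactly one coordinate, vertex measure ≡ 1. -/
noncomputable def cube (n : ℕ) : WGraph (Fin n → Bool) where
  w x y := if (Finset.univ.filter fun i => x i ≠ y i).card = 1 then 1 else 0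
  m _ := 1
  symm x y := by
    have h : (Finset.univ.filter fun i => x i ≠ y i)
        = (Finset.univ.filter fun i => y i ≠ x i) := by
      apply Finset.filter_congr
      intro i _
      simp [ne_comm]
    simp [h]
  nonneg x y := by (try dsimp only); split <;> norm_num
  loopless x := by simp
  mpos _ := one_pos
  locfin x := Set.toFinite _

/-! On the cube, `Δ`, `Γ` and `Γ₂` are expressed through the discrete partial derivatives
`∂ᵢf(x) = f(x + eᵢ) - f(x)`: `2Γ(f) = Σᵢ (∂ᵢf)²`, and, because the mixed differences `∂ᵢ∂ⱼf`
are symmetric in `i, j`, `4Γ₂(f) = Σᵢⱼ (∂ᵢ∂ⱼf)²`. Keeping only the diagonal terms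
`∂ᵢ∂ᵢf = -2 ∂ᵢf` gives `Γ₂(f) ≥ Σᵢ (∂ᵢf)² = 2Γ(f)`. -/

section FlipAt

variable {ι : Type*} [DecidableEq ι]

def flipAt (x : ι → Bool) (i : ι) : ι → Bool := Function.update x i (!x i)

lemma flipAt_apply (x : ι → Bool) (i j : ι) :
    flipAt x i j = if j = i then !x j else x j := by
  unfold flipAt
  split_ifs with h
  · subst h; exact Function.update_self _ _ _
  · exact Function.update_of_ne h _ _

lemma flipAt_flipAt (x : ι → Bool) (i : ι) : flipAt (flipAt x i) i = x := by
  funext j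
  simp only [flipAt_apply]
  split_ifs <;> simp

lemma flipAt_comm (x : ι → Bool) (i j : ι) :
    flipAt (flipAt x i) j = flipAt (flipAt x j) i := by
  funext k
  simp only [flipAt_apply]
  split_ifs <;> simp_all

lemma flipAt_injective (x : ι → Bool) : Function.Injective (flipAt x) := by
  intro i j hij
  by_contra h
  simpa [flipAt_apply, h] using congr_fun hij i

lemma flipAt_eq_iff {x y : ι → Bool} {i : ι} : flipAt x i = y ↔ ∀ j, x j ≠ y j ↔ j = i := by
  simp only [funext_iff, flipAt_apply]
  refine forall_congr' fun j => ?_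
  split_ifs with h <;> cases x j <;> cases y j <;> simp [h]

lemma hammingDist_eq_one_iff [Fintype ι] {x y : ι → Bool} :
    hammingDist x y = 1 ↔ ∃ i, flipAt x i = y := by
  simp only [hammingDist, Finset.card_eq_one, Finset.ext_iff, Finset.mem_filter,
    Finset.mem_univ, true_and, Finset.mem_singleton, flipAt_eq_iff]

def flipDiff (f : (ι → Bool) → ℝ) (i : ι) (x : ι → Bool) : ℝ := f (flipAt x i) - f x

lemma flipDiff_flipDiff_comm (f : (ι → Bool) → ℝ) (i j : ι) :
    flipDiff (flipDiff f i) j = flipDiff (flipDiff f j) i := by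
  funext x
  simp only [flipDiff, flipAt_comm x i j]
  ring

lemma flipDiff_flipDiff_self (f : (ι → Bool) → ℝ) (i : ι) (x : ι → Bool) :
    flipDiff (flipDiff f i) i x = -2 * flipDiff f i x := by
  simp only [flipDiff, flipAt_flipAt]
  ring

end FlipAt

lemma Finset.sum_sum_sub_mul_eq_zero_of_symm {ι R : Type*} [CommRing R] (s : Finset ι)
    (a : ι → R) (c : ι → ι → R) (hc : ∀ i j, c i j = c j i) :
    ∑ i ∈ s, ∑ j ∈ s, (a j - a i) * c i j = 0 := by
  have hswap : ∑ i ∈ s, ∑ j ∈ s, a j * c i j = ∑ i ∈ s, ∑ j ∈ s, a i * c i j := by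
    rw [Finset.sum_comm]
    simp only [hc]
  simp only [sub_mul, Finset.sum_sub_distrib, hswap, sub_self]

namespace cube

variable {n : ℕ}

lemma tsum_w_mul (x : Fin n → Bool) (g : (Fin n → Bool) → ℝ) :
    ∑' y, (cube n).w x y * g y = ∑ i, g (flipAt x i) := by
  have hnbrs : ({y | hammingDist x y = 1} : Finset _) = Finset.univ.image (flipAt x) := by
    ext y
    simp [hammingDist_eq_one_iff]
  change ∑' y, (if hammingDist x y = 1 then (1 : ℝ) else 0) * g y = _
  simp only [tsum_fintype, ite_mul, one_mul, zero_mul]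
  rw [← Finset.sum_filter, hnbrs, Finset.sum_image fun i _ j _ h => flipAt_injective x h]

lemma lap_eq (f : (Fin n → Bool) → ℝ) (x : Fin n → Bool) :
    (cube n).lap f x = ∑ i, flipDiff f i x := by
  rw [WGraph.lap, tsum_w_mul x (fun y => f y - f x)]
  simp [cube, flipDiff]

lemma gamma_eq (f g : (Fin n → Bool) → ℝ) (x : Fin n → Bool) :
    (cube n).gamma f g x = (∑ i, flipDiff f i x * flipDiff g i x) / 2 := by
  simp only [WGraph.gamma, lap_eq, Finset.mul_sum, ← Finset.sum_sub_distrib]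
  congr 1
  exact Finset.sum_congr rfl fun i _ => by simp only [flipDiff, Pi.mul_apply]; ring

lemma gamma2_eq (f : (Fin n → Bool) → ℝ) (x : Fin n → Bool) :
    (cube n).gamma2 f x = (∑ i, ∑ j, flipDiff (flipDiff f j) i x ^ 2) / 4 := by
  set a : Fin n → ℝ := fun i => flipDiff f i x
  set c : Fin n → Fin n → ℝ := fun i j => flipDiff (flipDiff f j) i x
  have hc : ∀ i j, c i j = c j i := fun i j => by simp only [c, flipDiff_flipDiff_comm]
  -- The cross terms `(a j - a i) * c i j` cancel in the double sum because `c` is symmetric.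
  have hexpand : (cube n).gamma2 f x = ∑ i, ∑ j, (c i j ^ 2 / 4 + (a j - a i) * c i j / 2) := by
    simp only [WGraph.gamma2, gamma_eq, lap_eq, flipDiff, Finset.sum_div, Finset.mul_sum,
      ← Finset.sum_sub_distrib]
    refine Finset.sum_congr rfl fun i _ => Finset.sum_congr rfl fun j _ => ?_
    simp only [a, c, flipDiff]
    ring
  simp only [hexpand, Finset.sum_add_distrib, ← Finset.sum_div, zero_div, add_zero,
    Finset.univ.sum_sum_sub_mul_eq_zero_of_symm a c hc, c]

end cube

/-- the hypercube Q_n satisfies CD(2,∞): Γ₂(f) ≥ 2Γ(f). -/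
theorem cube_CD_two (n : ℕ) (f : (Fin n → Bool) → ℝ) (x : Fin n → Bool) :
    2 * (cube n).gamma f f x ≤ (cube n).gamma2 f x := by
  have hdiag : ∀ i, 4 * flipDiff f i x ^ 2 ≤ ∑ j, flipDiff (flipDiff f j) i x ^ 2 := fun i =>
    calc 4 * flipDiff f i x ^ 2 = flipDiff (flipDiff f i) i x ^ 2 := by
          rw [flipDiff_flipDiff_self]; ring
      _ ≤ _ := Finset.single_le_sum (f := fun j => flipDiff (flipDiff f j) i x ^ 2)
          (fun j _ => sq_nonneg _) (Finset.mem_univ i)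
  calc 2 * (cube n).gamma f f x = (∑ i, 4 * flipDiff f i x ^ 2) / 4 := by
        rw [cube.gamma_eq, ← Finset.mul_sum]
        simp only [sq]
        ring
    _ ≤ (cube n).gamma2 f x := by
        rw [cube.gamma2_eq]
        gcongr with i
        exact hdiag i
end

section
/- On a finite weighted graph, the Bakry-Émery condition CD(K,∞) (i.e., Γ₂(f) ≥ KΓ(f) for all f) implies the semigroup gradient estimate Γ(P_t f) ≤ e^{-2Kt} P_t(Γf) pointwise for all f: V → ℝ and t ≥ 0, where P_t = e^{tΔ}. -/
open scoped ENNReal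

variable {V : Type*}

variable [Fintype V]

/-- The graph Laplacian as a linear map on functions (finite vertex set). -/
noncomputable def WGraph.lapL (G : WGraph V) : (V → ℝ) →ₗ[ℝ] (V → ℝ) where
  toFun f := G.lap f
  map_add' f g := by
    funext x
    simp only [WGraph.lap, tsum_fintype, Pi.add_apply]
    rw [← mul_add, ← Finset.sum_add_distrib]
    congr 1
    exact Finset.sum_congr rfl fun y _ => by ring
  map_smul' c f := by
    funext x
    simp only [WGraph.lap, tsum_fintype, Pi.smul_apply, smul_eq_mul, RingHom.id_apply]
    rw [Finset.mul_sum, Finset.mul_sum, Finset.mul_sum]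
    exact Finset.sum_congr rfl fun y _ => by ring

/-- The heat semigroup P_t = e^{tΔ} of a finite weighted graph. -/
noncomputable def WGraph.heat (G : WGraph V) (t : ℝ) (f : V → ℝ) : V → ℝ :=
  NormedSpace.exp (t • (LinearMap.toContinuousLinearMap G.lapL)) f

/-! For fixed `t`, the function `φ s = e^{-2Ks} P_s Γ(P_{t-s} f)` equals `Γ(P_t f)` at `s = 0`
and `e^{-2Kt} P_t Γ(f)` at `s = t`. Since `∂_s P_s = P_s Δ` and `∂_s P_{t-s} f = -Δ P_{t-s} f`,
its derivative is `2 e^{-2Ks} P_s (Γ₂ - KΓ)(P_{t-s} f)`, the image under `P_s` of a function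
that CD(K,∞) makes nonnegative. The semigroup preserves nonnegativity because `Δ + c` is a
nonnegative matrix once `c` dominates the degrees, so `φ` is nondecreasing. -/

section
variable {E : Type*} [NormedAddCommGroup E] [NormedSpace ℝ E] [CompleteSpace E]
  [PartialOrder E] [IsOrderedAddMonoid E] [OrderClosedTopology E] [PosSMulMono ℝ E]

theorem ContinuousLinearMap.monotone_exp_smul {M : E →L[ℝ] E} (hM : Monotone M) {s : ℝ}
    (hs : 0 ≤ s) : Monotone ⇑(NormedSpace.exp (s • M)) := by
  intro g h hgh
  rw [← sub_nonneg, ← map_sub]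
  refine ((NormedSpace.exp_series_hasSum_exp' (𝕂 := ℝ) (s • M)).mapL
    (ContinuousLinearMap.apply ℝ E (h - g))).nonneg fun n => ?_
  have hMn : 0 ≤ (M ^ n) (h - g) := by
    simpa [FunLike.coe_pow_eq_iterate] using hM.iterate n (sub_nonneg.2 hgh)
  simp only [ContinuousLinearMap.apply_apply, smul_pow, smul_apply]
  positivity

theorem NormedSpace.exp_smul_one {A : Type*} [NormedRing A] [NormedAlgebra ℝ A] [CompleteSpace A]
    (r : ℝ) : NormedSpace.exp (r • (1 : A)) = Real.exp r • 1 := by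
  rw [← Algebra.algebraMap_eq_smul_one, ← NormedSpace.algebraMap_exp_comm, Real.exp_eq_exp_ℝ,
    Algebra.algebraMap_eq_smul_one]

theorem ContinuousLinearMap.monotone_exp_smul_of_monotone_add_smul_one {M : E →L[ℝ] E} {c : ℝ}
    (hM : Monotone ⇑(M + c • 1)) {s : ℝ} (hs : 0 ≤ s) :
    Monotone ⇑(NormedSpace.exp (s • M)) := by
  have hshift :
      NormedSpace.exp (s • (M + c • 1)) = Real.exp (s * c) • NormedSpace.exp (s • M) := by
    rw [smul_add, smul_smul, NormedSpace.exp_add_of_commute_of_mem_ball (𝕂 := ℝ)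
      ((Commute.one_right _).smul_right _) (by simp [NormedSpace.expSeries_radius_eq_top])
      (by simp [NormedSpace.expSeries_radius_eq_top]), NormedSpace.exp_smul_one, mul_smul_one]
  have : ⇑(NormedSpace.exp (s • M)) =
      fun g => Real.exp (-(s * c)) • NormedSpace.exp (s • (M + c • 1)) g := by
    ext g : 1
    rw [hshift, smul_apply, smul_smul, ← Real.exp_add, neg_add_cancel, Real.exp_zero, one_smul]
  rw [this]
  exact (monotone_exp_smul hM hs).const_smul (Real.exp_pos _).le
end

namespace WGraph

variable (G : WGraph V)

noncomputable def lapCLM : (V → ℝ) →L[ℝ] (V → ℝ) :=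
  LinearMap.toContinuousLinearMap G.lapL

@[simp] lemma lapCLM_apply (f : V → ℝ) : G.lapCLM f = G.lap f := rfl

lemma heat_apply (t : ℝ) (f : V → ℝ) : G.heat t f = NormedSpace.exp (t • G.lapCLM) f := rfl

lemma heat_zero (f : V → ℝ) : G.heat 0 f = f := by
  simp [heat_apply]

lemma monotone_lapCLM_add_smul_one : Monotone ⇑(G.lapCLM + (∑ z, G.deg z) • 1) := by
  intro f g hfg y
  obtain ⟨h, hh, rfl⟩ : ∃ h, 0 ≤ h ∧ g = f + h := ⟨g - f, sub_nonneg.2 hfg, by abel⟩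
  rw [← sub_nonneg, ← Pi.sub_apply, ← map_sub, add_sub_cancel_left]
  show 0 ≤ G.lap h y + (∑ z, G.deg z) * h y
  have hdeg : G.deg y ≤ ∑ z, G.deg z :=
    Finset.single_le_sum (fun z _ => div_nonneg (tsum_nonneg (G.nonneg z)) (G.mpos z).le)
      (Finset.mem_univ y)
  have hsplit : G.lap h y = (1 / G.m y) * ∑ z, G.w y z * h z - G.deg y * h y := by
    simp only [lap, deg, tsum_fintype, mul_sub, Finset.sum_sub_distrib, ← Finset.sum_mul]
    ring
  have hsum : 0 ≤ (1 / G.m y) * ∑ z, G.w y z * h z :=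
    mul_nonneg (div_nonneg zero_le_one (G.mpos y).le)
      (Finset.sum_nonneg fun z _ => mul_nonneg (G.nonneg y z) (hh z))
  nlinarith [mul_nonneg (sub_nonneg.2 hdeg) (hh y)]

lemma monotone_heat {t : ℝ} (ht : 0 ≤ t) : Monotone (G.heat t) :=
  ContinuousLinearMap.monotone_exp_smul_of_monotone_add_smul_one
    G.monotone_lapCLM_add_smul_one ht

omit [Fintype V] in
lemma gamma_comm (f g : V → ℝ) : G.gamma f g = G.gamma g f := by
  ext x
  simp only [gamma, mul_comm f g]
  ring

lemma gamma_add_left (f f' g : V → ℝ) : G.gamma (f + f') g = G.gamma f g + G.gamma f' g := by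
  ext x
  simp only [gamma, add_mul, ← lapCLM_apply, map_add, Pi.add_apply]
  ring

lemma gamma_smul_left (c : ℝ) (f g : V → ℝ) : G.gamma (c • f) g = c • G.gamma f g := by
  ext x
  simp only [gamma, smul_mul_assoc, ← lapCLM_apply, map_smul, Pi.smul_apply, smul_eq_mul]
  ring

noncomputable def gammaCLM : (V → ℝ) →L[ℝ] (V → ℝ) →L[ℝ] (V → ℝ) :=
  LinearMap.toContinuousLinearMap <| LinearMap.toContinuousLinearMap.toLinearMap ∘ₗ
    LinearMap.mk₂ ℝ G.gamma G.gamma_add_left G.gamma_smul_left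
      (fun f g g' => by simp only [G.gamma_comm f, gamma_add_left])
      (fun c f g => by simp only [G.gamma_comm f, gamma_smul_left])

@[simp] lemma gammaCLM_apply (f g : V → ℝ) : G.gammaCLM f g = G.gamma f g := rfl

omit [Fintype V] in
lemma lap_gamma_sub_two_smul_gamma_lap (g : V → ℝ) :
    G.lap (G.gamma g g) - 2 • G.gamma g (G.lap g) = 2 • G.gamma2 g := by
  ext x
  simp only [gamma2, Pi.sub_apply, Pi.smul_apply]
  ring

lemma heat_lap (t : ℝ) (f : V → ℝ) : G.heat t (G.lap f) = G.lap (G.heat t f) :=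
  congrArg (· f) (((Commute.refl G.lapCLM).smul_left t).exp_left).eq

lemma hasDerivAt_heat_apply {w : ℝ → V → ℝ} {w' : V → ℝ} {s : ℝ}
    (hw : HasDerivAt w w' s) :
    HasDerivAt (fun r => G.heat r (w r)) (G.heat s (G.lap (w s) + w')) s := by
  simpa [heat_apply] using (hasDerivAt_exp_smul_const G.lapCLM s).clm_apply hw

lemma hasDerivAt_heat_sub (t : ℝ) (f : V → ℝ) (s : ℝ) :
    HasDerivAt (fun r => G.heat (t - r) f) (-G.lap (G.heat (t - s) f)) s := by
  have := (G.hasDerivAt_heat_apply (hasDerivAt_const (t - s) f)).scomp s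
    ((hasDerivAt_id s).const_sub t)
  simpa [heat_lap, Function.comp_def] using this

lemma hasDerivAt_gamma_self {u : ℝ → V → ℝ} {u' : V → ℝ} {s : ℝ}
    (hu : HasDerivAt u u' s) :
    HasDerivAt (fun r => G.gamma (u r) (u r)) (2 • G.gamma (u s) u') s := by
  simpa [G.gamma_comm u', two_smul] using
    G.gammaCLM.hasDerivAt_of_bilinear (fun _ => hu) (fun _ => hu)

lemma heat_nonneg {t : ℝ} (ht : 0 ≤ t) {g : V → ℝ} (hg : 0 ≤ g) : 0 ≤ G.heat t g := by
  simpa [heat_apply] using G.monotone_heat ht hg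

lemma hasDerivAt_exp_smul_heat_gamma_heat (K t : ℝ) (f : V → ℝ) (s : ℝ) :
    HasDerivAt
      (fun r => Real.exp (-(2 * K * r)) •
        G.heat r (G.gamma (G.heat (t - r) f) (G.heat (t - r) f)))
      ((2 * Real.exp (-(2 * K * s))) • G.heat s
        (G.gamma2 (G.heat (t - s) f) - K • G.gamma (G.heat (t - s) f) (G.heat (t - s) f))) s := by
  set u := G.heat (t - s) f
  have hexp :
      HasDerivAt (fun r => Real.exp (-(2 * K * r))) (Real.exp (-(2 * K * s)) * -(2 * K)) s :=
    (((hasDerivAt_id s).const_mul (2 * K)).neg.congr_deriv (by ring)).exp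
  have hsum : G.lap (G.gamma u u) + 2 • G.gamma u (-G.lap u) = 2 • G.gamma2 u := by
    rw [show G.gamma u (-G.lap u) = -G.gamma u (G.lap u) from map_neg (G.gammaCLM u) _,
      smul_neg, ← sub_eq_add_neg, lap_gamma_sub_two_smul_gamma_lap]
  refine (hexp.smul (G.hasDerivAt_heat_apply
    (G.hasDerivAt_gamma_self (G.hasDerivAt_heat_sub t f s)))).congr_deriv ?_
  rw [hsum]
  simp only [u, heat_apply, map_sub, map_smul, map_nsmul]
  module

end WGraph

/-- on a finite weighted graph, CD(K,∞) implies the gradient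
estimate Γ(P_t f) ≤ e^{-2Kt} P_t(Γf) for P_t = e^{tΔ}. -/
theorem CD_implies_gradient_estimate (G : WGraph V) (K : ℝ)
    (hCD : ∀ (f : V → ℝ) (x : V), K * G.gamma f f x ≤ G.gamma2 f x) :
    ∀ (f : V → ℝ) (t : ℝ), 0 ≤ t → ∀ x,
      G.gamma (G.heat t f) (G.heat t f) x ≤
        Real.exp (-(2 * K * t)) * G.heat t (G.gamma f f) x := by
  intro f t ht x
  have hderiv s := hasDerivAt_pi.1 (G.hasDerivAt_exp_smul_heat_gamma_heat K t f s) x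
  have hmono := monotoneOn_of_hasDerivWithinAt_nonneg (convex_Ici 0)
    (HasDerivAt.continuousOn fun s _ => hderiv s) (fun s _ => (hderiv s).hasDerivWithinAt)
    (fun s hs => mul_nonneg (by positivity)
      (G.heat_nonneg (interior_subset hs) (fun y => sub_nonneg.2 (hCD _ y)) x))
  simpa [G.heat_zero] using hmono Set.self_mem_Ici ht ht
end
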